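/- Let G be a profinite group and U ≤ G an open subgroup which is (topologically) finitely presented. Then G is (topologically) finitely presented. -/

import Mathlib

/-! Basic notions about profinite groups: free profinite groups of finite rank,
topological finite generation and topological finite presentation. -/

/-- `s : Fin n → F` exhibits the profinite group `F` as the free profinite group on the
`n` letters `s 0, …, s (n-1)`: every map from the letters to a profinite group extends
uniquely to a continuous homomorphism. -/
def IsFreeProfiniteOn (F : Type) [Group F] [TopologicalSpace F] {n : ℕ} (s : Fin n → F) :
    Prop :=
  ∀ (H : Type) [Group H] [TopologicalSpace H] [IsTopologicalGroup H] [CompactSpace H]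
    [T2Space H] [TotallyDisconnectedSpace H] (f : Fin n → H),
    ∃! φ : F →* H, Continuous φ ∧ ∀ i, φ (s i) = f i

/-- A topological group is topologically finitely generated if some finitely generated
subgroup is dense. -/
def IsTopFinitelyGenerated (G : Type) [Group G] [TopologicalSpace G] : Prop :=
  ∃ S : Finset G, Dense ((Subgroup.closure (S : Set G) : Subgroup G) : Set G)

/-- A profinite group `G` is topologically finitely presented if there is a continuous
surjection `φ : F → G` from a free profinite group of finite rank such that `Ker φ` is
(topologically) finitely generated as a closed normal subgroup of `F`, i.e. `Ker φ` is the
closure of the normal subgroup generated by finitely many elements. -/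
def IsFinitelyPresentedProfinite (G : Type) [Group G] [TopologicalSpace G] : Prop :=
  ∃ (F : Type) (gF : Group F) (tF : TopologicalSpace F),
    ∃ _tg : @IsTopologicalGroup F tF gF,
    letI := gF; letI := tF; letI := _tg
    CompactSpace F ∧ T2Space F ∧ TotallyDisconnectedSpace F ∧
    ∃ (n : ℕ) (s : Fin n → F) (φ : F →* G),
      IsFreeProfiniteOn F s ∧ Continuous φ ∧ Function.Surjective φ ∧
      ∃ T : Finset F, (T : Set F) ⊆ (φ.ker : Set F) ∧
        (Subgroup.normalClosure (T : Set F)).topologicalClosure = φ.ker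

/-! Let `φ : A → U` be a finite presentation of `U` on letters `s₁, …, sₙ` with relators `T`, and
let `c₁, …, cₘ` represent the cosets of `U` in `G`. The free profinite group `F` on `n + m` letters
maps onto `G` by `ψ`, sending the letters to the `φ sᵢ` and the `cⱼ`. The open subgroup
`E = ψ⁻¹ U` of `F` is topologically generated by a finite set `D` (Schreier), and `φ` lifts through
`ψ` to `β : A → E`. Choosing `a_d` with `φ a_d = ψ d`, the kernel of `ψ`, which lies in `E`, is the
closed normal subgroup generated by the finitely many elements `β t` (`t ∈ T`) and `(β a_d)⁻¹ d`
(`d ∈ D`): modulo these, `β` induces an inverse of `ψ : E → U`. -/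

open Topology

namespace ProfiniteGrp.ProfiniteCompletion

theorem lift_etaFn {G : GrpCat} {P : ProfiniteGrp} (f : G ⟶ GrpCat.of P) (x : G) :
    lift f (etaFn G x) = f x :=
  CategoryTheory.ConcreteCategory.congr_hom (lift_eta f) x

end ProfiniteGrp.ProfiniteCompletion

theorem IsFreeProfiniteOn.hom_ext {F : Type} [Group F] [TopologicalSpace F] {n : ℕ}
    {s : Fin n → F} (hs : IsFreeProfiniteOn F s) {H : Type} [Group H] [TopologicalSpace H]
    [IsTopologicalGroup H] [CompactSpace H] [T2Space H] [TotallyDisconnectedSpace H]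
    {f g : F →* H} (hf : Continuous f) (hg : Continuous g) (h : ∀ i, f (s i) = g (s i)) :
    f = g :=
  (hs H (g ∘ s)).unique ⟨hf, h⟩ ⟨hg, fun _ => rfl⟩

open ProfiniteGrp.ProfiniteCompletion in
abbrev FreeProfiniteGroup (k : ℕ) : ProfiniteGrp := completion (GrpCat.of (FreeGroup (Fin k)))

namespace FreeProfiniteGroup

open ProfiniteGrp.ProfiniteCompletion

def of {k : ℕ} (i : Fin k) : FreeProfiniteGroup k :=
  etaFn (GrpCat.of (FreeGroup (Fin k))) (FreeGroup.of i)

theorem isFreeProfiniteOn_of (k : ℕ) : IsFreeProfiniteOn (FreeProfiniteGroup k) of := by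
  intro H _ _ _ _ _ _ f
  let ℓ := lift (P := ProfiniteGrp.of H) (GrpCat.ofHom (FreeGroup.lift f))
  have hℓ (i : Fin k) : ℓ (of i) = f i := (lift_etaFn _ _).trans (FreeGroup.lift_apply_of ..)
  refine ⟨ℓ.hom.toMonoidHom, ⟨ℓ.hom.continuous, hℓ⟩, fun ψ ⟨hψ, hψs⟩ => ?_⟩
  have hdense : ψ.comp (eta _).hom = ℓ.hom.toMonoidHom.comp (eta _).hom :=
    FreeGroup.ext_hom _ _ fun i => (hψs i).trans (hℓ i).symm
  ext x
  exact congrFun ((denseRange _).equalizer hψ ℓ.hom.continuous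
    (funext (DFunLike.congr_fun hdense))) x

theorem isTopFinitelyGenerated (k : ℕ) : IsTopFinitelyGenerated (FreeProfiniteGroup k) := by
  classical
  refine ⟨Finset.univ.image of, (denseRange _).mono ?_⟩
  rintro _ ⟨w, rfl⟩
  have hgen :
      (⊤ : Subgroup (FreeGroup (Fin k))).map (eta _).hom ≤ Subgroup.closure (Set.range of) := by
    rw [← FreeGroup.closure_range_of, MonoidHom.map_closure, ← Set.range_comp]
    rfl
  rw [Finset.coe_image, Finset.coe_univ, Set.image_univ]
  exact hgen ⟨w, trivial, rfl⟩

end FreeProfiniteGroup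

theorem Subgroup.finiteIndex_of_isOpen {G : Type*} [Group G] [TopologicalSpace G]
    [IsTopologicalGroup G] [CompactSpace G] {U : Subgroup G} (hU : IsOpen (U : Set G)) :
    U.FiniteIndex :=
  have := U.quotient_finite_of_isOpen hU
  Subgroup.finiteIndex_of_finite_quotient

theorem Subgroup.compactSpace_of_isOpen {G : Type*} [Group G] [TopologicalSpace G]
    [IsTopologicalGroup G] [CompactSpace G] {U : Subgroup G} (hU : IsOpen (U : Set G)) :
    CompactSpace U :=
  isCompact_iff_compactSpace.1 (U.isClosed_of_isOpen hU).isCompact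

theorem MonoidHom.surjective_of_le_range {F G : Type*} [Group F] [Group G] {ψ : F →* G}
    {U : Subgroup G} (hU : U ≤ ψ.range) (hcosets : ∀ q : G ⧸ U, ∃ x, (ψ x : G ⧸ U) = q) :
    Function.Surjective ψ := by
  intro g
  obtain ⟨x, hx⟩ := hcosets g
  obtain ⟨y, hy⟩ := hU (QuotientGroup.eq.1 hx)
  exact ⟨x * y, by rw [map_mul, hy, mul_inv_cancel_left]⟩

theorem IsTopFinitelyGenerated.subgroup_of_isOpen {F : Type} [Group F] [TopologicalSpace F]
    [IsTopologicalGroup F] (hF : IsTopFinitelyGenerated F) {E : Subgroup F} [E.FiniteIndex]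
    (hE : IsOpen (E : Set F)) : IsTopFinitelyGenerated E := by
  classical
  obtain ⟨S, hS⟩ := hF
  let Γ := Subgroup.closure (S : Set F)
  have : Group.FG Γ := (Group.fg_iff_subgroup_fg Γ).2 ⟨S, rfl⟩
  have hfg : Group.FG (E.subgroupOf Γ) := Subgroup.fg_of_index_ne_zero _
  let ι : E.subgroupOf Γ →* E :=
    (Γ.subtype.comp (E.subgroupOf Γ).subtype).codRestrict E fun x => x.2
  obtain ⟨S', hS'⟩ := Group.fg_def.1 hfg
  refine ⟨S'.image ι, ?_⟩
  have hrange : (Subgroup.closure ((S'.image ι : Finset E) : Set E) : Set E) = E.subtype ⁻¹' Γ := by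
    rw [Finset.coe_image, ← MonoidHom.map_closure, hS', ← MonoidHom.range_eq_map]
    ext x
    constructor
    · rintro ⟨y, rfl⟩
      exact y.1.2
    · exact fun hx => ⟨⟨⟨x, hx⟩, x.2⟩, rfl⟩
  rw [hrange]
  exact hS.preimage hE.isOpenMap_subtype_val

section Kernels

theorem MonoidHom.isClosed_ker {G M : Type*} [Group G] [TopologicalSpace G] [MulOneClass M]
    [TopologicalSpace M] [T1Space M] (f : G →* M) (hf : Continuous f) :
    IsClosed (f.ker : Set G) :=
  isClosed_singleton.preimage hf

variable {E U A Q : Type*} [Group E] [TopologicalSpace E] [Group U] [TopologicalSpace U]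
  [Group A] [TopologicalSpace A] [Group Q] [TopologicalSpace Q]

theorem Topology.IsQuotientMap.exists_continuous_monoidHom_comp_eq {φ : A →* U}
    (hφ : IsQuotientMap φ)
    {f : A →* Q} (hf : Continuous f) (hker : φ.ker ≤ f.ker) :
    ∃ g : U →* Q, Continuous g ∧ g.comp φ = f := by
  let g := φ.liftOfRightInverse _ (Function.rightInverse_surjInv hφ.surjective) ⟨f, hker⟩
  have hg : g.comp φ = f := φ.liftOfRightInverse_comp _ _ ⟨f, hker⟩
  refine ⟨g, hφ.continuous_iff.2 ?_, hg⟩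
  rw [← MonoidHom.coe_comp, hg]
  exact hf

variable [IsTopologicalGroup E] [IsTopologicalGroup A]

theorem MonoidHom.ker_le_of_lift_on_dense {ψ : E →* U} (hψ : Continuous ψ) {φ : A →* U}
    (hφ : IsQuotientMap φ) {β : A →* E} (hβ : Continuous β) {T : Set A}
    (hT : φ.ker ≤ (Subgroup.normalClosure T).topologicalClosure) {D : Set E}
    (hD : Dense (Subgroup.closure D : Set E)) {a : E → A} (ha : ∀ d ∈ D, φ (a d) = ψ d)
    {N : Subgroup E} [N.Normal] (hN : IsClosed (N : Set E)) (hTN : β '' T ⊆ N)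
    (hDN : ∀ d ∈ D, (β (a d))⁻¹ * d ∈ N) : ψ.ker ≤ N := by
  have : IsClosed (N : Set E) := hN -- makes `E ⧸ N` Hausdorff
  let b := (QuotientGroup.mk' N).comp β
  have hb : Continuous b := QuotientGroup.continuous_mk.comp hβ
  have hkerb : φ.ker ≤ b.ker := by
    refine hT.trans (Subgroup.topologicalClosure_minimal _ (Subgroup.normalClosure_le_normal ?_) ?_)
    · rintro t ht
      simpa [b] using hTN ⟨t, ht, rfl⟩
    · exact b.isClosed_ker hb
  obtain ⟨u, hu, hub⟩ := hφ.exists_continuous_monoidHom_comp_eq hb hkerb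
  have hmk : QuotientGroup.mk' N = u.comp ψ := by
    suffices Set.EqOn (QuotientGroup.mk' N) (u.comp ψ) (Subgroup.closure D) from
      DFunLike.coe_injective (Continuous.ext_on hD QuotientGroup.continuous_mk (hu.comp hψ) this)
    refine MonoidHom.eqOn_closure fun d hd => ?_
    calc QuotientGroup.mk' N d = b (a d) := (QuotientGroup.eq.2 (hDN d hd)).symm
      _ = u (ψ d) := by rw [← hub, MonoidHom.comp_apply, ha d hd]
  intro x hx
  have : QuotientGroup.mk' N x = 1 := by rw [hmk, MonoidHom.comp_apply, hx, map_one]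
  simpa using this

theorem MonoidHom.ker_eq_topologicalClosure_normalClosure_of_lift [T1Space U] {ψ : E →* U}
    (hψ : Continuous ψ) {φ : A →* U} (hφ : IsQuotientMap φ) {β : A →* E} (hβ : Continuous β)
    (hψβ : ψ.comp β = φ) {T : Set A} (hT : (Subgroup.normalClosure T).topologicalClosure = φ.ker)
    {D : Set E} (hD : Dense (Subgroup.closure D : Set E)) {a : E → A}
    (ha : ∀ d ∈ D, φ (a d) = ψ d) :
    ψ.ker =
      (Subgroup.normalClosure (β '' T ∪ (fun d => (β (a d))⁻¹ * d) '' D)).topologicalClosure := by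
  set R := β '' T ∪ (fun d => (β (a d))⁻¹ * d) '' D
  have : (Subgroup.normalClosure R).topologicalClosure.Normal :=
    Subgroup.is_normal_topologicalClosure _
  have hR : R ⊆ (Subgroup.normalClosure R).topologicalClosure := fun r hr =>
    Subgroup.le_topologicalClosure _ (Subgroup.subset_normalClosure hr)
  refine le_antisymm (ψ.ker_le_of_lift_on_dense hψ hφ hβ hT.ge hD ha
      (Subgroup.isClosed_topologicalClosure _) (fun t ht => hR (Or.inl ht))
      (fun d hd => hR (Or.inr ⟨d, hd, rfl⟩)))
    (Subgroup.topologicalClosure_minimal _ (Subgroup.normalClosure_le_normal ?_)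
      (ψ.isClosed_ker hψ))
  rintro _ (⟨t, ht, rfl⟩ | ⟨d, hd, rfl⟩)
  · have ht' : t ∈ φ.ker := hT ▸ Subgroup.le_topologicalClosure _ (Subgroup.subset_normalClosure ht)
    rw [SetLike.mem_coe, MonoidHom.mem_ker, ← MonoidHom.comp_apply, hψβ]
    exact ht'
  · rw [SetLike.mem_coe, MonoidHom.mem_ker, map_mul, map_inv, ← MonoidHom.comp_apply, hψβ,
      ha d hd, inv_mul_cancel]

end Kernels

theorem MonoidHom.ker_eq_topologicalClosure_normalClosure_image_subtype {F G : Type*} [Group F]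
    [TopologicalSpace F] [IsTopologicalGroup F] [Group G] [TopologicalSpace G] [T1Space G]
    {ψ : F →* G} (hψ : Continuous ψ) {E : Subgroup F} (hE : ψ.ker ≤ E) {R : Set E}
    (hR : (ψ.comp E.subtype).ker = (Subgroup.normalClosure R).topologicalClosure) :
    ψ.ker = (Subgroup.normalClosure (E.subtype '' R)).topologicalClosure := by
  refine le_antisymm (fun x hx => ?_) (Subgroup.topologicalClosure_minimal _
    (Subgroup.normalClosure_le_normal ?_) (ψ.isClosed_ker hψ))
  · have hxR : (⟨x, hE hx⟩ : E) ∈ closure (Subgroup.normalClosure R : Set E) := by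
      rw [← Subgroup.topologicalClosure_coe, ← hR]
      exact hx
    have hmaps : Set.MapsTo E.subtype (Subgroup.normalClosure R)
        (Subgroup.normalClosure (E.subtype '' R)) :=
      Subgroup.normalClosure_le_normal (N := (Subgroup.normalClosure _).comap E.subtype)
        fun r hr => Subgroup.subset_normalClosure ⟨r, hr, rfl⟩
    rw [← SetLike.mem_coe, Subgroup.topologicalClosure_coe]
    exact map_mem_closure continuous_subtype_val hxR hmaps
  · rintro _ ⟨r, hr, rfl⟩
    exact hR.ge (Subgroup.le_topologicalClosure _ (Subgroup.subset_normalClosure hr))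

theorem MonoidHom.exists_finset_topologicalClosure_normalClosure_eq_ker {F : Type} {G A : Type*}
    [Group F] [TopologicalSpace F] [IsTopologicalGroup F] [Group G] [TopologicalSpace G] [T1Space G]
    [Group A] [TopologicalSpace A] [IsTopologicalGroup A] {ψ : F →* G} (hψ : Continuous ψ)
    {U : Subgroup G} (hE : IsTopFinitelyGenerated (U.comap ψ)) {φ : A →* U}
    (hφ : IsQuotientMap φ) {T : Finset A}
    (hT : (Subgroup.normalClosure (T : Set A)).topologicalClosure = φ.ker) {β : A →* U.comap ψ}
    (hβ : Continuous β) (hψβ : ∀ x, ψ (β x) = φ x) :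
    ∃ R : Finset F, (Subgroup.normalClosure (R : Set F)).topologicalClosure = ψ.ker := by
  classical
  let E := U.comap ψ
  let ψE : E →* U := (ψ.comp E.subtype).codRestrict U fun x => x.2
  have hψE : Continuous ψE := (hψ.comp continuous_subtype_val).subtype_mk _
  have hψEβ : ψE.comp β = φ := MonoidHom.ext fun x => Subtype.ext (hψβ x)
  obtain ⟨D, hD⟩ := hE
  choose a ha using fun d : E => hφ.surjective (ψE d)
  have hkerE := ψE.ker_eq_topologicalClosure_normalClosure_of_lift hψE hφ hβ hψEβ hT hD
    fun d _ => ha d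
  have hker := ψ.ker_eq_topologicalClosure_normalClosure_image_subtype hψ
    (fun x hx => show ψ x ∈ U from hx ▸ U.one_mem)
    ((MonoidHom.ker_codRestrict _ U _).symm.trans hkerE)
  exact ⟨(T.image β ∪ D.image fun d => (β (a d))⁻¹ * d).image E.subtype, by simpa using hker.symm⟩

/-- **A profinite group with a finitely presented open subgroup is finitely presented.**
If `G` is a profinite group and `U ≤ G` is an open subgroup which is topologically finitely
presented, then `G` is topologically finitely presented. -/
theorem finitelyPresented_of_openSubgroup
    (G : Type) [Group G] [TopologicalSpace G] [IsTopologicalGroup G] [CompactSpace G]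
    [T2Space G] [TotallyDisconnectedSpace G]
    (U : Subgroup G) (hUopen : IsOpen (U : Set G))
    (hUfp : IsFinitelyPresentedProfinite U) :
    IsFinitelyPresentedProfinite G := by
  obtain ⟨A, _, _, _, _, _, _, n, sU, φ, hfreeU, hφ, hφsurj, T, -, hT⟩ := hUfp
  have := U.compactSpace_of_isOpen hUopen
  have := U.quotient_finite_of_isOpen hUopen
  let m := Nat.card (G ⧸ U)
  let c (j : Fin m) : G := ((Finite.equivFin (G ⧸ U)).symm j).out
  obtain ⟨ψ, ⟨hψ, hψs⟩, -⟩ := FreeProfiniteGroup.isFreeProfiniteOn_of (n + m) G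
    (Fin.append (fun i => (φ (sU i) : G)) c)
  let E := U.comap ψ
  have hEopen : IsOpen (E : Set (FreeProfiniteGroup (n + m))) := hUopen.preimage hψ
  have := Subgroup.finiteIndex_of_isOpen hEopen
  have := Subgroup.compactSpace_of_isOpen hEopen
  obtain ⟨β, ⟨hβ, hβs⟩, -⟩ := hfreeU E fun i => ⟨FreeProfiniteGroup.of (Fin.castAdd m i),
    show ψ _ ∈ U by simp [hψs]⟩
  have hψβ (x : A) : ψ (β x) = φ x := DFunLike.congr_fun (hfreeU.hom_ext
    (f := ψ.comp (E.subtype.comp β)) (g := U.subtype.comp φ)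
    (hψ.comp (continuous_subtype_val.comp hβ)) (continuous_subtype_val.comp hφ) fun i =>
      (congrArg (ψ ∘ Subtype.val) (hβs i)).trans ((hψs _).trans (Fin.append_left ..))) x
  have hψsurj : Function.Surjective ψ := ψ.surjective_of_le_range (U := U)
    (fun u hu => have ⟨x, hx⟩ := hφsurj ⟨u, hu⟩; ⟨β x, (hψβ x).trans (congrArg Subtype.val hx)⟩)
    (fun q => ⟨FreeProfiniteGroup.of (Fin.natAdd n (Finite.equivFin _ q)), by simp [hψs, c]⟩)
  obtain ⟨R, hR⟩ := ψ.exists_finset_topologicalClosure_normalClosure_eq_ker hψ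
    ((FreeProfiniteGroup.isTopFinitelyGenerated _).subgroup_of_isOpen hEopen)
    (hφ.isClosedMap.isQuotientMap hφ hφsurj) hT hβ hψβ
  exact ⟨_, _, _, _, inferInstance, inferInstance, inferInstance, n + m, FreeProfiniteGroup.of, ψ,
    FreeProfiniteGroup.isFreeProfiniteOn_of _, hψ, hψsurj, R,
    hR ▸ Subgroup.subset_normalClosure.trans (Subgroup.le_topologicalClosure _), hR⟩
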